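/- Let A be a weakly monotone well-founded ordered F-algebra and ≿ a precedence on F, and define on non-variable terms s = f(s_1,…,s_m), t = g(t_1,…,t_n): s ⊐ t iff s >_A t, or (s ≥_A t and f ≻ g). Then the relation ⊐ is well-founded on T(F,V)∖V. -/
import Mathlib


/-- First-order terms over a signature `F` with arity function `ar` and variables `V`. -/
inductive Term (F : Type) (ar : F → ℕ) (V : Type) : Type where
  | var : V → Term F ar V
  | app : (f : F) → (Fin (ar f) → Term F ar V) → Term F ar V

namespace Term

variable {F V : Type} {ar : F → ℕ}

/-- Application of a substitution `σ : V → Term F ar V` to a term. -/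
def subst (σ : V → Term F ar V) : Term F ar V → Term F ar V
  | var v => σ v
  | app f args => app f (fun i => (args i).subst σ)

/-- Interpretation of a term in an `F`-algebra with carrier `A` under assignment `α`. -/
def eval {A : Type} (I : (f : F) → (Fin (ar f) → A) → A) (α : V → A) :
    Term F ar V → A
  | var v => α v
  | app f args => I f (fun i => (args i).eval I α)

/-- A term is a non-variable term (function application). -/
def IsApp : Term F ar V → Prop
  | var _ => False
  | app _ _ => True

end Term

section Algebra

variable {F V A : Type}

/-- `RC lt a b` : reflexive closure of the strict order `lt`, i.e. `a ≤ b`. -/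
def RC (lt : A → A → Prop) (a b : A) : Prop := lt a b ∨ a = b

variable (ar : F → ℕ) (I : (f : F) → (Fin (ar f) → A) → A) (lt : A → A → Prop)

/-- `s >_A t` : `[α](t) < [α](s)` for every assignment `α`. -/
def GTA (s t : Term F ar V) : Prop := ∀ α : V → A, lt (t.eval I α) (s.eval I α)

/-- `s ≥_A t` : `[α](t) ≤ [α](s)` for every assignment `α`. -/
def GEA (s t : Term F ar V) : Prop := ∀ α : V → A, RC lt (t.eval I α) (s.eval I α)

/-- The algebra is simple: `f_A(a_1, …, a_n) ≥ a_i`. -/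
def Simple : Prop := ∀ (f : F) (as : Fin (ar f) → A) (i : Fin (ar f)), RC lt (as i) (I f as)

/-- The algebra is weakly monotone: `a_i > b` implies
`f_A(a_1,…,a_i,…,a_n) ≥ f_A(a_1,…,b,…,a_n)`. -/
def WeaklyMonotone : Prop :=
  ∀ (f : F) (as : Fin (ar f) → A) (i : Fin (ar f)) (b : A),
    lt b (as i) → RC lt (I f (Function.update as i b)) (I f as)

end Algebra

section WPO

variable {F V A : Type} (ar : F → ℕ) (I : (f : F) → (Fin (ar f) → A) → A)
  (lt : A → A → Prop) (prec : F → F → Prop)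

mutual
  /-- The weighted path order induced by the algebra `(A, I, lt)` and the precedence `prec`. -/
  inductive WPO : Term F ar V → Term F ar V → Prop where
    /-- (1) `s >_A t`. -/
    | alg {s t} : GTA ar I lt s t → WPO s t
    /-- (2a) `s ≥_A t` and `s_i >_wpo t`. -/
    | sub {f ss t} (i : Fin (ar f)) :
        GEA ar I lt (Term.app f ss) t → WPO (ss i) t → WPO (Term.app f ss) t
    /-- (2a) `s ≥_A t` and `s_i = t`. -/
    | subEq {f ss t} (i : Fin (ar f)) :
        GEA ar I lt (Term.app f ss) t → ss i = t → WPO (Term.app f ss) t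
    /-- (2b-i) `s ≥_A t`, `s >_wpo t_j` for all `j`, and `f ≻ g`. -/
    | prc {f ss g ts} :
        GEA ar I lt (Term.app f ss) (Term.app g ts) →
        (∀ j, WPO (Term.app f ss) (ts j)) →
        prec f g → ¬ prec g f → WPO (Term.app f ss) (Term.app g ts)
    /-- (2b-ii) `s ≥_A t`, `s >_wpo t_j` for all `j`, `f ≿ g` and lex comparison of arguments. -/
    | lex {f ss g ts} :
        GEA ar I lt (Term.app f ss) (Term.app g ts) →
        (∀ j, WPO (Term.app f ss) (ts j)) →
        prec f g → WPOLex (List.ofFn ss) (List.ofFn ts) →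
        WPO (Term.app f ss) (Term.app g ts)

  /-- Lexicographic extension of `WPO` to argument lists (of possibly different lengths). -/
  inductive WPOLex : List (Term F ar V) → List (Term F ar V) → Prop where
    | head {s t l₁ l₂} : WPO s t → WPOLex (s :: l₁) (t :: l₂)
    | tail {s l₁ l₂} : WPOLex l₁ l₂ → WPOLex (s :: l₁) (s :: l₂)
    | longer {s l₁} : WPOLex (s :: l₁) []
end

end WPO

section SPO

variable {F V : Type} {ar : F → ℕ} (qge qgt : Term F ar V → Term F ar V → Prop)

mutual
  /-- The semantic path order induced by the order pair `(qge, qgt)` (`⊒∼`, `⊐`). -/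
  inductive SPO : Term F ar V → Term F ar V → Prop where
    /-- (1) `s_i >_spo t`. -/
    | sub {f ss t} (i : Fin (ar f)) : SPO (ss i) t → SPO (Term.app f ss) t
    /-- (1) `s_i = t`. -/
    | subEq {f ss t} (i : Fin (ar f)) : ss i = t → SPO (Term.app f ss) t
    /-- (2a) `s >_spo t_j` for all `j` and `s ⊐ t`. -/
    | gt {f ss g ts} : (∀ j, SPO (Term.app f ss) (ts j)) →
        qgt (Term.app f ss) (Term.app g ts) → SPO (Term.app f ss) (Term.app g ts)
    /-- (2b) `s >_spo t_j` for all `j`, `s ⊒∼ t` and lex comparison of arguments. -/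
    | lex {f ss g ts} : (∀ j, SPO (Term.app f ss) (ts j)) →
        qge (Term.app f ss) (Term.app g ts) →
        SPOLex (List.ofFn ss) (List.ofFn ts) → SPO (Term.app f ss) (Term.app g ts)

  /-- Lexicographic extension of `SPO` to argument lists. -/
  inductive SPOLex : List (Term F ar V) → List (Term F ar V) → Prop where
    | head {s t l₁ l₂} : SPO s t → SPOLex (s :: l₁) (t :: l₂)
    | tail {s l₁ l₂} : SPOLex l₁ l₂ → SPOLex (s :: l₁) (s :: l₂)
    | longer {s l₁} : SPOLex (s :: l₁) []
end

end SPO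

section Props

variable {F V : Type} {ar : F → ℕ}

/-- Closure under contexts: replacing one argument. -/
def ClosedCtx (R : Term F ar V → Term F ar V → Prop) : Prop :=
  ∀ (f : F) (args : Fin (ar f) → Term F ar V) (i : Fin (ar f)) (s t : Term F ar V),
    R s t → R (Term.app f (Function.update args i s)) (Term.app f (Function.update args i t))

/-- Closure under substitutions. -/
def ClosedSubst (R : Term F ar V → Term F ar V → Prop) : Prop :=
  ∀ (σ : V → Term F ar V) (s t : Term F ar V), R s t → R (s.subst σ) (t.subst σ)

/-- A reduction order: a well-founded strict order closed under contexts and substitutions. -/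
def ReductionOrder (R : Term F ar V → Term F ar V → Prop) : Prop :=
  (∀ s, ¬ R s s) ∧ Transitive R ∧ WellFounded (fun s t => R t s) ∧
    ClosedCtx R ∧ ClosedSubst R

/-- `Subterm t s` : `t` is a subterm of `s`. -/
inductive Subterm : Term F ar V → Term F ar V → Prop where
  | refl {t} : Subterm t t
  | arg {t f ss} (i : Fin (ar f)) : Subterm t (ss i) → Subterm t (Term.app f ss)

/-- `ProperSubterm t s` : `t` is a proper subterm of `s`. -/
def ProperSubterm (t s : Term F ar V) : Prop :=
  ∃ (f : F) (ss : Fin (ar f) → Term F ar V) (i : Fin (ar f)),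
    s = Term.app f ss ∧ Subterm t (ss i)

/-- The rewrite relation of a TRS `R`: closure of the rules under substitutions and contexts. -/
inductive Rewrite (R : Set (Term F ar V × Term F ar V)) : Term F ar V → Term F ar V → Prop where
  | rule {l r} (σ : V → Term F ar V) : (l, r) ∈ R → Rewrite R (l.subst σ) (r.subst σ)
  | ctx {s t} (f : F) (args : Fin (ar f) → Term F ar V) (i : Fin (ar f)) :
      Rewrite R s t →
      Rewrite R (Term.app f (Function.update args i s)) (Term.app f (Function.update args i t))

end Props

section Pair

variable {F V A : Type} (ar : F → ℕ) (I : (f : F) → (Fin (ar f) → A) → A)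
  (lt : A → A → Prop) (prec : F → F → Prop)

/-- `s ⊒∼ t` : both non-variable, and `s >_A t`, or `s ≥_A t` and `root(s) ≿ root(t)`. -/
def QGE (s t : Term F ar V) : Prop :=
  ∃ (f : F) (ss : Fin (ar f) → Term F ar V) (g : F) (ts : Fin (ar g) → Term F ar V),
    s = Term.app f ss ∧ t = Term.app g ts ∧
      (GTA ar I lt s t ∨ (GEA ar I lt s t ∧ prec f g))

/-- `s ⊐ t` : both non-variable, and `s >_A t`, or `s ≥_A t` and `root(s) ≻ root(t)`. -/
def QGT (s t : Term F ar V) : Prop :=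
  ∃ (f : F) (ss : Fin (ar f) → Term F ar V) (g : F) (ts : Fin (ar g) → Term F ar V),
    s = Term.app f ss ∧ t = Term.app g ts ∧
      (GTA ar I lt s t ∨ (GEA ar I lt s t ∧ prec f g ∧ ¬ prec g f))

variable (Im : (f : F) → (Fin (ar f) → A) → A)

/-- Interpretation of the marked term `t♯` (root symbol interpreted by `Im`). -/
def evalSharp (α : V → A) : Term F ar V → A
  | .var v => α v
  | .app f ts => Im f (fun i => (ts i).eval I α)

/-- `s♯ >_A t♯`. -/
def GTAS (s t : Term F ar V) : Prop :=
  ∀ α : V → A, lt (evalSharp ar I Im α t) (evalSharp ar I Im α s)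

/-- `s♯ ≥_A t♯`. -/
def GEAS (s t : Term F ar V) : Prop :=
  ∀ α : V → A, RC lt (evalSharp ar I Im α t) (evalSharp ar I Im α s)

/-- Marked version of `⊒∼` : `s♯ >_A t♯`, or `s♯ ≥_A t♯` and `root(s) ≿ root(t)`. -/
def QGES (s t : Term F ar V) : Prop :=
  ∃ (f : F) (ss : Fin (ar f) → Term F ar V) (g : F) (ts : Fin (ar g) → Term F ar V),
    s = Term.app f ss ∧ t = Term.app g ts ∧
      (GTAS ar I lt Im s t ∨ (GEAS ar I lt Im s t ∧ prec f g))

/-- Marked version of `⊐` : `s♯ >_A t♯`, or `s♯ ≥_A t♯` and `root(s) ≻ root(t)`. -/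
def QGTS (s t : Term F ar V) : Prop :=
  ∃ (f : F) (ss : Fin (ar f) → Term F ar V) (g : F) (ts : Fin (ar g) → Term F ar V),
    s = Term.app f ss ∧ t = Term.app g ts ∧
      (GTAS ar I lt Im s t ∨ (GEAS ar I lt Im s t ∧ prec f g ∧ ¬ prec g f))

/-- The generalized weighted path order: `s ≥_A t` and `s >_spo t` for the SPO induced
from the marked order pair. -/
def GWPO (s t : Term F ar V) : Prop :=
  GEA ar I lt s t ∧ SPO (QGES ar I lt prec Im) (QGTS ar I lt prec Im) s t

end Pair

/-- For a weakly monotone well-founded ordered `F`-algebra (over a finite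
signature) and a precedence, the relation `⊐` (here `QGT`) is well-founded on terms. -/
theorem qgt_well_founded
    {F V A : Type} [Fintype F] [Countable V] [Infinite V] [Nonempty A]
    (ar : F → ℕ) (I : (f : F) → (Fin (ar f) → A) → A) (lt : A → A → Prop)
    (lt_irrefl : ∀ a, ¬ lt a a) (lt_trans : Transitive lt)
    (lt_wf : WellFounded lt)
    (hmono : WeaklyMonotone ar I lt)
    (prec : F → F → Prop) (prec_refl : ∀ f, prec f f)
    (prec_trans : ∀ f g h, prec f g → prec g h → prec f h) :
    WellFounded (fun s t : Term F ar V => QGT ar I lt prec t s) := by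
  by_cases hF : Nonempty F
  case neg =>
    constructor
    intro t
    constructor
    intro s hs
    obtain ⟨f, _⟩ := hs
    exact absurd ⟨f⟩ hF
  obtain ⟨f0⟩ := hF
  obtain ⟨a0⟩ := (inferInstance : Nonempty A)
  set pstrict : F → F → Prop := fun g f => prec f g ∧ ¬ prec g f with hps
  have hpwf : WellFounded pstrict := by
    haveI : IsTrans F pstrict := ⟨fun a b c ⟨h1, h2⟩ ⟨h3, h4⟩ =>
      ⟨prec_trans _ _ _ h3 h1, fun hac => h2 (prec_trans _ _ _ hac h3)⟩⟩
    haveI : IsIrrefl F pstrict := ⟨fun a ⟨h1, h2⟩ => h2 h1⟩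
    exact Finite.wellFounded_of_trans_of_irrefl _
  set root : Term F ar V → F := fun t => match t with
    | .var _ => f0
    | .app f _ => f with hroot
  set m : Term F ar V → A × F := fun t => (t.eval I (fun _ => a0), root t) with hm
  have hwf : WellFounded (InvImage (Prod.Lex lt pstrict) m) :=
    InvImage.wf m (lt_wf.prod_lex hpwf)
  refine Subrelation.wf ?_ hwf
  rintro s t ⟨f, ss, g, ts, rfl, rfl, h⟩
  rcases h with h | ⟨h, hfg, hgf⟩
  · exact Prod.Lex.left _ _ (h (fun _ => a0))
  · rcases h (fun _ => a0) with h' | h'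
    · exact Prod.Lex.left _ _ h'
    · show Prod.Lex lt pstrict ((Term.app g ts).eval I _, g) ((Term.app f ss).eval I _, f)
      rw [h']
      exact Prod.Lex.right _ ⟨hfg, hgf⟩
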